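/- Let x^1, ..., x^s be real numbers and let X = (x^1, ..., x^s) ∈ ℝ^s. For every η_0 > 0 there exist finitely many rational vectors X_1, ..., X_N ∈ ℚ^s, each of the form (p^1/q, ..., p^s/q) with |q x^j - p^j| < η_0 for all j, such that X lies in the convex hull of {X_1, ..., X_N}. -/

import Mathlib

/-!
Let `E` be the set of errors `q x - p` (with `q ≥ 1`) of sup-norm `< η₀`. Every `e ∈ E` has an
almost opposite partner in `E`: if `q₀ x - p₀` is tiny, the approximation with denominator
`(q + 1) q₀ - q` has error `(q + 1) (q₀ x - p₀) - e ≈ -e`. In a finite-dimensional space such a set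
has `0` in its convex hull: choose a basis `b` of `span E` inside `E` and partners `b'`; then
`∑ (b + b')` is small, hence equal to `∑ c_b b` with all `c_b < 1`, and
`0 = ∑ (1 - c_b) b + ∑ b'` is a nonnegative combination. Finally `∑ wᵢ (qᵢ x - pᵢ) = 0` says that
`x` is the barycentre of the points `pᵢ / qᵢ` with weights `wᵢ qᵢ`.
-/

open Set Submodule

section

variable {V : Type*} [AddCommGroup V] [Module ℝ V]

theorem mem_convexHull_of_sum_smul_eq_smul {κ : Type*} [Fintype κ] {s : Set V} {x : V}
    (w : κ → ℝ) (z : κ → V) (hw : ∀ i, 0 ≤ w i) (hw_pos : 0 < ∑ i, w i) (hz : ∀ i, z i ∈ s)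
    (h : ∑ i, w i • z i = (∑ i, w i) • x) : x ∈ convexHull ℝ s := by
  have := Finset.univ.centerMass_mem_convexHull (fun i _ => hw i) hw_pos (fun i _ => hz i)
  rwa [Finset.centerMass, h, inv_smul_smul₀ hw_pos.ne'] at this

theorem mem_convexHull_range_of_sum_smul_smul_sub_eq_zero {κ : Type*} [Fintype κ] (x : V)
    (w t : κ → ℝ) (y : κ → V) (hw : ∀ i, 0 ≤ w i) (ht : ∀ i, 1 ≤ t i) (hw_pos : 0 < ∑ i, w i)
    (h : ∑ i, w i • t i • (x - y i) = 0) : x ∈ convexHull ℝ (range y) := by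
  refine mem_convexHull_of_sum_smul_eq_smul (fun i => w i * t i) y
    (fun i => mul_nonneg (hw i) (by linarith [ht i])) ?_ (fun i => mem_range_self i) ?_
  · exact hw_pos.trans_le (Finset.sum_le_sum fun i _ => le_mul_of_one_le_right (hw i) (ht i))
  · simp only [smul_sub, Finset.sum_sub_distrib, sub_eq_zero, smul_smul] at h
    rw [Finset.sum_smul, h]

theorem zero_mem_convexHull_of_sum_smul_eq_sum_add {κ : Type*} [Fintype κ] [Nonempty κ]
    {s : Set V} (v v' : κ → V) {c : κ → ℝ} (hv : ∀ i, v i ∈ s) (hv' : ∀ i, v' i ∈ s)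
    (hc : ∀ i, c i ≤ 1) (h : ∑ i, c i • v i = ∑ i, (v i + v' i)) : (0 : V) ∈ convexHull ℝ s := by
  -- `0 = ∑ (1 - c i) • v i + ∑ v' i` is a nonnegative combination with positive total weight.
  refine mem_convexHull_of_sum_smul_eq_smul (Sum.elim (fun i => 1 - c i) 1) (Sum.elim v v')
    (Sum.rec (fun i => sub_nonneg.mpr (hc i)) fun _ => zero_le_one) ?_ (Sum.rec hv hv') ?_
  · have := Finset.sum_nonneg fun i (_ : i ∈ Finset.univ) => sub_nonneg.mpr (hc i)
    simp only [Fintype.sum_sum_type, Sum.elim_inl, Sum.elim_inr, Pi.one_apply, Finset.sum_const,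
      Finset.card_univ, nsmul_eq_mul, mul_one]
    linarith [(Nat.cast_pos (α := ℝ)).mpr (Fintype.card_pos (α := κ))]
  · simp only [Fintype.sum_sum_type, Sum.elim_inl, Sum.elim_inr, Pi.one_apply, one_smul,
      sub_smul, Finset.sum_sub_distrib, h, smul_zero, Finset.sum_add_distrib]
    abel

end

section

variable {V : Type*} [NormedAddCommGroup V] [NormedSpace ℝ V]

theorem LinearIndependent.exists_pos_forall_norm_lt_exists_coeff_lt_one {κ : Type*} [Fintype κ]
    {v : κ → V} (hv : LinearIndependent ℝ v) :
    ∃ ε > 0, ∀ r ∈ span ℝ (range v), ‖r‖ < ε →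
      ∃ c : κ → ℝ, (∀ i, c i < 1) ∧ ∑ i, c i • v i = r := by
  set L := Fintype.linearCombination ℝ v
  obtain ⟨K, hK, hL⟩ :=
    L.exists_antilipschitzWith (LinearMap.ker_eq_bot.mpr hv.fintypeLinearCombination_injective)
  refine ⟨(K : ℝ)⁻¹, by positivity, fun r hr hrε => ?_⟩
  obtain ⟨c, rfl⟩ : r ∈ LinearMap.range L := by rwa [Fintype.range_linearCombination]
  refine ⟨c, fun i => ?_, Fintype.linearCombination_apply ℝ v c⟩
  calc c i ≤ ‖c‖ := (le_abs_self _).trans (norm_le_pi_norm c i)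
    _ ≤ K * ‖L c‖ := ZeroHomClass.bound_of_antilipschitz L hL c
    _ < K * (K : ℝ)⁻¹ := by gcongr
    _ = 1 := mul_inv_cancel₀ (by positivity)

theorem zero_mem_convexHull_of_forall_exists_norm_add_lt [FiniteDimensional ℝ V] {E : Set V}
    (hE : E.Nonempty) (h : ∀ e ∈ E, ∀ δ > 0, ∃ e' ∈ E, ‖e + e'‖ < δ) :
    (0 : V) ∈ convexHull ℝ E := by
  obtain ⟨B, hBE, hspan, hli⟩ := exists_linearIndependent ℝ E
  have : Fintype B := @Fintype.ofFinite B hli.finite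
  rcases B.eq_empty_or_nonempty with rfl | ⟨b₀, hb₀⟩
  · obtain ⟨e, he⟩ := hE
    have he0 : e = 0 := by simpa [← hspan] using subset_span (R := ℝ) he
    exact subset_convexHull ℝ E (he0 ▸ he)
  obtain ⟨ε, hε, hcoeff⟩ := hli.exists_pos_forall_norm_lt_exists_coeff_lt_one
  have : Nonempty B := ⟨⟨b₀, hb₀⟩⟩
  have hcard : (0 : ℝ) < Fintype.card B := by exact_mod_cast Fintype.card_pos
  choose! neg hnegE hneg using fun b (hb : b ∈ E) => h b hb (ε / Fintype.card B) (by positivity)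
  set r := ∑ b : B, ((b : V) + neg b)
  have hr_norm : ‖r‖ < ε := calc
    ‖r‖ ≤ ∑ b : B, ‖(b : V) + neg b‖ := norm_sum_le _ _
    _ < ∑ _b : B, ε / Fintype.card B :=
      Finset.sum_lt_sum_of_nonempty Finset.univ_nonempty fun b _ => hneg b (hBE b.2)
    _ = ε := by simp only [Finset.sum_const, Finset.card_univ, nsmul_eq_mul]; field_simp
  have hr_span : r ∈ span ℝ (range ((↑) : B → V)) := by
    rw [Subtype.range_coe, hspan]
    exact sum_mem fun b _ =>
      add_mem (subset_span (hBE b.2)) (subset_span (hnegE _ (hBE b.2)))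
  obtain ⟨c, hc1, hcr⟩ := hcoeff r hr_span hr_norm
  exact zero_mem_convexHull_of_sum_smul_eq_sum_add (↑) (fun b : B => neg b) (fun b => hBE b.2)
    (fun b => hnegE _ (hBE b.2)) (fun b => (hc1 b).le) hcr

end

section

variable {ι : Type*} [Fintype ι]

theorem exists_pos_nat_norm_smul_sub_int_lt (x : ι → ℝ) {δ : ℝ} (hδ : 0 < δ) :
    ∃ (q : ℕ) (p : ι → ℤ), 0 < q ∧ ‖(q : ℝ) • x - fun j => (p j : ℝ)‖ < δ := by
  set u : ℕ → ι → ℝ := fun n j => Int.fract (n * x j)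
  have hu : ∀ n, u n ∈ Metric.closedBall (0 : ι → ℝ) 1 := fun n => by
    refine mem_closedBall_zero_iff.mpr ((pi_norm_le_iff_of_nonneg zero_le_one).mpr fun j => ?_)
    rw [Real.norm_of_nonneg (Int.fract_nonneg _)]
    exact (Int.fract_lt_one _).le
  obtain ⟨_, -, φ, hφ, hlim⟩ := (isCompact_closedBall (0 : ι → ℝ) 1).tendsto_subseq hu
  obtain ⟨N, hN⟩ := Metric.cauchySeq_iff'.mp hlim.cauchySeq δ hδ
  have hlt : φ N < φ (N + 1) := hφ N.lt_succ_self
  refine ⟨φ (N + 1) - φ N, fun j => ⌊(φ (N + 1) : ℝ) * x j⌋ - ⌊(φ N : ℝ) * x j⌋,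
    Nat.sub_pos_of_lt hlt, ?_⟩
  convert hN (N + 1) N.le_succ using 1
  rw [dist_eq_norm]
  congr 1
  ext j
  simp only [u, Function.comp_apply, Int.fract, Pi.sub_apply, Pi.smul_apply, smul_eq_mul,
    Nat.cast_sub hlt.le, Int.cast_sub]
  ring

def rationalApproxErrors (x : ι → ℝ) (η : ℝ) : Set (ι → ℝ) :=
  {e | ∃ (q : ℕ) (p : ι → ℤ), 0 < q ∧ e = (q : ℝ) • x - (fun j => (p j : ℝ)) ∧ ‖e‖ < η}

theorem rationalApproxErrors_nonempty (x : ι → ℝ) {η : ℝ} (hη : 0 < η) :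
    (rationalApproxErrors x η).Nonempty :=
  let ⟨q, p, hq, hqp⟩ := exists_pos_nat_norm_smul_sub_int_lt x hη
  ⟨_, q, p, hq, rfl, hqp⟩

theorem exists_mem_rationalApproxErrors_norm_add_lt (x : ι → ℝ) {η : ℝ} {e : ι → ℝ}
    (he : e ∈ rationalApproxErrors x η) {δ : ℝ} (hδ : 0 < δ) :
    ∃ e' ∈ rationalApproxErrors x η, ‖e + e'‖ < δ := by
  obtain ⟨q, p, hq, rfl, he⟩ := he
  set e := (q : ℝ) • x - fun j => (p j : ℝ)
  set ε := min δ (η - ‖e‖)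
  have hε : 0 < ε := lt_min hδ (sub_pos.mpr he)
  obtain ⟨q₀, p₀, hq₀, hqp₀⟩ := exists_pos_nat_norm_smul_sub_int_lt x
    (div_pos hε (by positivity : (0 : ℝ) < q + 1))
  -- The denominator `(q + 1) q₀ - q` has error `(q + 1) (q₀ x - p₀) - e`, which is nearly `-e`.
  have hq' : q < (q + 1) * q₀ := Nat.lt_of_lt_of_le q.lt_succ_self (Nat.le_mul_of_pos_right _ hq₀)
  set e' := (((q + 1) * q₀ - q : ℕ) : ℝ) • x - fun j => (((q + 1) * p₀ j - p j : ℤ) : ℝ)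
  have hsum : e + e' = ((q : ℝ) + 1) • ((q₀ : ℝ) • x - fun j => (p₀ j : ℝ)) := by
    ext j
    simp only [e, e', Pi.add_apply, Pi.sub_apply, Pi.smul_apply, smul_eq_mul,
      Nat.cast_sub hq'.le]
    push_cast
    ring
  have hsum_lt : ‖e + e'‖ < ε := by
    rw [hsum, norm_smul, Real.norm_of_nonneg (by positivity), ← lt_div_iff₀' (by positivity)]
    exact hqp₀
  refine ⟨e', ⟨_, _, Nat.sub_pos_of_lt hq', rfl, ?_⟩, hsum_lt.trans_le (min_le_left _ _)⟩
  calc ‖e'‖ ≤ ‖e + e'‖ + ‖e‖ := norm_le_add_norm_add' _ _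
    _ < ε + ‖e‖ := by gcongr
    _ ≤ η := by linarith [min_le_right δ (η - ‖e‖)]

theorem zero_mem_convexHull_rationalApproxErrors (x : ι → ℝ) {η : ℝ} (hη : 0 < η) :
    (0 : ι → ℝ) ∈ convexHull ℝ (rationalApproxErrors x η) :=
  zero_mem_convexHull_of_forall_exists_norm_add_lt (rationalApproxErrors_nonempty x hη)
    fun _ he _ hδ => exists_mem_rationalApproxErrors_norm_add_lt x he hδ

end

/-- Fact 1.F.2 (2): any real vector lies in the convex hull of finitely many
good rational approximations of itself. -/
theorem convex_hull_of_rational_approximations (s : ℕ) (x : Fin s → ℝ)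
    (η₀ : ℝ) (hη₀ : 0 < η₀) :
    ∃ (N : ℕ) (q : Fin N → ℕ) (p : Fin N → Fin s → ℤ),
      (∀ i, 0 < q i) ∧
      (∀ i j, |(q i : ℝ) * x j - p i j| < η₀) ∧
      x ∈ convexHull ℝ (Set.range fun i : Fin N => fun j : Fin s => (p i j : ℝ) / (q i : ℝ)) := by
  obtain ⟨κ, _, w, z, hw, hw_one, hz, hwz⟩ :=
    mem_convexHull_iff_exists_fintype.mp (zero_mem_convexHull_rationalApproxErrors x hη₀)
  choose q p hq hzqp hz_norm using hz
  set e := Fintype.equivFin κ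
  refine ⟨Fintype.card κ, q ∘ e.symm, p ∘ e.symm, fun i => hq _, fun i j => ?_, ?_⟩
  · calc |(q (e.symm i) : ℝ) * x j - p (e.symm i) j| = ‖z (e.symm i) j‖ := by
          simp [hzqp]
      _ ≤ ‖z (e.symm i)‖ := norm_le_pi_norm _ j
      _ < η₀ := hz_norm _
  · change x ∈ convexHull ℝ (range ((fun i j => (p i j : ℝ) / q i) ∘ e.symm))
    rw [e.symm.surjective.range_comp]
    refine mem_convexHull_range_of_sum_smul_smul_sub_eq_zero x w (fun i => q i) _ hw
      (fun i => Nat.one_le_cast.mpr (hq i)) (by simp [hw_one]) ?_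
    rw [← hwz]
    refine Finset.sum_congr rfl fun i _ => ?_
    ext j
    have hqi : (q i : ℝ) ≠ 0 := Nat.cast_ne_zero.mpr (hq i).ne'
    simp [hzqp, field]
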